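/- arXiv:1104.2662 — 4 statements merged into one kernel-verified Lean document; each statement's English description precedes it below -/
import Mathlib

section
/- Let s ≥ 2 and d_1, …, d_s ≥ 2 be integers. For every prime p with p > max_i d_i and every integer n ≥ 1, with q = p^n one has the two inequalities d_1⋯d_s · D_{F}(⌊p/d_1⌋, …, ⌊p/d_s⌋)/p^{s−1} ≤ dim_{F}(R_p/𝔪_p^{[q]})/q^{s−1} ≤ d_1⋯d_s · D_{F}(⌊p/d_1⌋+1, …, ⌊p/d_s⌋+1)/p^{s−1}, where F = ℤ/pℤ. -/
/-!
`F[x]` is free over `F[x₁^d₁, …, xₘ^dₘ]` on the monomials `x^e` with `eᵢ < dᵢ`, so extending an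
ideal along the substitution `xᵢ ↦ xᵢ^dᵢ` multiplies its colength by `∏ dᵢ`. The ideal
`(Σ xᵢ^dᵢ, x₁^q, …, xₘ^q)` lies between the extensions of `(Σ xᵢ, x₁^k₁, …, xₘ^kₘ)` for
`dᵢ kᵢ ≥ q` and for `dᵢ kᵢ ≤ q`, and eliminating `xₘ` through `Σ xᵢ = 0` identifies the colength
of `(Σ xᵢ, xᵢ^kᵢ)` with `D(k)`. Taking `kᵢ = p^(n-1) ⌊p/dᵢ⌋` resp. `p^(n-1) (⌊p/dᵢ⌋ + 1)`, the
Frobenius identity `(Σ yᵢ)^(p^t) = Σ yᵢ^(p^t)` makes the ideal defining `D(p^t k)` the extension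
of the one defining `D(k)` along `yᵢ ↦ yᵢ^(p^t)`, whence `D(p^t k) = p^(ts) D(k)`.
-/

open MvPolynomial Filter

/-- `Dcolength F s k` : dimension over `F` of
`F[y_1,…,y_s] / (y_1^{k_1}, …, y_s^{k_s}, (y_1+⋯+y_s)^{k_{s+1}})`,
i.e. the quantity `D_F(k_1, …, k_{s+1})` of Han–Monsky (with `s+1` arguments
and `s` variables). -/
noncomputable def Dcolength (F : Type) [CommRing F] (s : ℕ) (k : Fin (s+1) → ℕ) : ℕ :=
  Module.finrank F (MvPolynomial (Fin s) F ⧸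
    Ideal.span (Set.range (fun i : Fin s =>
        (X i : MvPolynomial (Fin s) F) ^ k i.castSucc) ∪
      {(∑ i : Fin s, (X i : MvPolynomial (Fin s) F)) ^ k (Fin.last s)}))

/-- Dimension over `F` of `R/𝔪^{[q]}` where
`R = F[x_1,…,x_s]/(x_1^{d_1}+⋯+x_s^{d_s})` and `𝔪^{[q]} = (x_1^q,…,x_s^q)`. -/
noncomputable def hkColength (F : Type) [CommRing F] (s : ℕ) (d : Fin s → ℕ) (q : ℕ) : ℕ :=
  Module.finrank F (MvPolynomial (Fin s) F ⧸
    Ideal.span (insert (∑ i : Fin s, (X i : MvPolynomial (Fin s) F) ^ d i)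
      (Set.range fun i : Fin s => (X i : MvPolynomial (Fin s) F) ^ q)))

/-- The Han–Monsky function `g_λ(x_1,…,x_s)`. -/
noncomputable def gl (s : ℕ) (x : Fin s → ℝ) (lam : ℤ) : ℝ :=
  ∑ ε ∈ Finset.univ.filter
      (fun ε : Fin s → Bool =>
        2 * (lam : ℝ) ≤ ∑ i, (if ε i then (1:ℝ) else -1) * x i),
    (∏ i, (if ε i then (1:ℝ) else -1)) *
      ((∑ i, (if ε i then (1:ℝ) else -1) * x i) - 2 * (lam : ℝ)) ^ (s - 1)

/-- The Han–Monsky function `g(x_1,…,x_s) = (1/(2^{s-1}(s-1)!)) Σ_λ g_λ(x)`. -/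
noncomputable def gfun (s : ℕ) (x : Fin s → ℝ) : ℝ :=
  (1 / (2 ^ (s-1) * (Nat.factorial (s-1)))) * ∑' lam : ℤ, gl s x lam

theorem Ideal.finrank_quotient_le_of_le {F A : Type*} [Field F] [CommRing A] [Algebra F A]
    {I J : Ideal A} (h : I ≤ J) [Module.Finite F (A ⧸ I)] :
    Module.finrank F (A ⧸ J) ≤ Module.finrank F (A ⧸ I) :=
  LinearMap.finrank_le_finrank_of_surjective (f := (Ideal.Quotient.factorₐ F h).toLinearMap)
    (Ideal.Quotient.factor_surjective h)

noncomputable def Ideal.quotientEquivAlgOfInverse {R A B : Type*} [CommRing R] [CommRing A]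
    [CommRing B] [Algebra R A] [Algebra R B] {I : Ideal A} {J : Ideal B}
    (f : A →ₐ[R] B) (g : B →ₐ[R] A) (hf : I ≤ J.comap f) (hg : J ≤ I.comap g)
    (hfg : (Ideal.Quotient.mkₐ R J).comp (f.comp g) = Ideal.Quotient.mkₐ R J)
    (hgf : (Ideal.Quotient.mkₐ R I).comp (g.comp f) = Ideal.Quotient.mkₐ R I) :
    (A ⧸ I) ≃ₐ[R] (B ⧸ J) :=
  AlgEquiv.ofAlgHom (Ideal.quotientMapₐ J f hf) (Ideal.quotientMapₐ I g hg)
    (Ideal.Quotient.algHom_ext R <| by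
      rw [AlgHom.comp_assoc, Ideal.quotient_map_comp_mkₐ, ← AlgHom.comp_assoc,
        Ideal.quotient_map_comp_mkₐ, AlgHom.comp_assoc, hfg, AlgHom.id_comp])
    (Ideal.Quotient.algHom_ext R <| by
      rw [AlgHom.comp_assoc, Ideal.quotient_map_comp_mkₐ, ← AlgHom.comp_assoc,
        Ideal.quotient_map_comp_mkₐ, AlgHom.comp_assoc, hgf, AlgHom.id_comp])

namespace MvPolynomial

variable {R : Type*} [CommRing R] {σ : Type*}

theorem finite_quotient_of_X_pow_mem [Finite σ] {I : Ideal (MvPolynomial σ R)} (N : σ → ℕ)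
    (h : ∀ i, X i ^ N i ∈ I) : Module.Finite R (MvPolynomial σ R ⧸ I) := by
  have hint : ∀ i, IsIntegral R (Ideal.Quotient.mkₐ R I (X i)) := fun i => by
    refine IsIntegral.of_pow (Nat.succ_pos (N i)) ?_
    rw [← map_pow, Ideal.Quotient.mkₐ_eq_mk,
      Ideal.Quotient.eq_zero_iff_mem.2 (I.pow_mem_of_pow_mem (h i) (N i).le_succ)]
    exact isIntegral_zero
  have hadjoin : Algebra.adjoin R (Set.range fun i => Ideal.Quotient.mkₐ R I (X i)) = ⊤ := by
    rw [Set.range_comp', Algebra.adjoin_image, adjoin_range_X, Algebra.map_top,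
      AlgHom.range_eq_top]
    exact Ideal.Quotient.mkₐ_surjective R I
  refine ⟨?_⟩
  rw [← Algebra.top_toSubmodule, ← hadjoin]
  exact fg_adjoin_of_finite (Set.finite_range _) (by rintro _ ⟨i, rfl⟩; exact hint i)

theorem finite_quotient_span_insert_range_X_pow [Finite σ] (a : MvPolynomial σ R) (n : σ → ℕ) :
    Module.Finite R (MvPolynomial σ R ⧸ Ideal.span (insert a (Set.range fun i => X i ^ n i))) :=
  finite_quotient_of_X_pow_mem n fun i => Ideal.subset_span (Set.mem_insert_of_mem _ ⟨i, rfl⟩)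

variable (d : σ → ℕ)

noncomputable def multiExpand : MvPolynomial σ R →ₐ[R] MvPolynomial σ R :=
  aeval fun i => X i ^ d i

theorem multiExpand_X (i : σ) : multiExpand d (X i : MvPolynomial σ R) = X i ^ d i :=
  aeval_X _ _

variable [Fintype σ]

noncomputable def prodXPow (e : σ → ℕ) : MvPolynomial σ R := ∏ i, X i ^ e i

theorem prodXPow_mul_prodXPow (e e' : σ → ℕ) :
    (prodXPow e * prodXPow e' : MvPolynomial σ R) = prodXPow (e + e') := by
  simp only [prodXPow, ← Finset.prod_mul_distrib, Pi.add_apply, pow_add]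

theorem monomial_one_eq_prodXPow (a : σ →₀ ℕ) :
    (monomial a 1 : MvPolynomial σ R) = prodXPow a := by
  rw [monomial_eq, C_1, one_mul, Finsupp.prod_fintype _ _ fun i => pow_zero _, prodXPow]

theorem prodXPow_eq_monomial_one (e : σ → ℕ) :
    (prodXPow e : MvPolynomial σ R) = monomial (Finsupp.equivFunOnFinite.symm e) 1 := by
  rw [monomial_one_eq_prodXPow, Finsupp.coe_equivFunOnFinite_symm]

theorem multiExpand_prodXPow (e : σ → ℕ) :
    multiExpand d (prodXPow e : MvPolynomial σ R) = prodXPow (fun i => d i * e i) := by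
  simp only [prodXPow, map_prod, map_pow, multiExpand_X, ← pow_mul]

variable (R) in
noncomputable def multiExpandSplit (hd : ∀ i, 0 < d i) :
    MvPolynomial σ R →ₗ[R] ((∀ i, Fin (d i)) → MvPolynomial σ R) :=
  (basisMonomials σ R).constr R fun a =>
    Pi.single (fun i => ⟨a i % d i, Nat.mod_lt _ (hd i)⟩) (prodXPow fun i => a i / d i)

variable {d}

theorem multiExpandSplit_monomial (hd : ∀ i, 0 < d i) (a : σ →₀ ℕ) :
    multiExpandSplit R d hd (monomial a 1) =
      Pi.single (fun i => ⟨a i % d i, Nat.mod_lt _ (hd i)⟩) (prodXPow fun i => a i / d i) :=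
  (basisMonomials σ R).constr_basis R _ a

variable [DecidableEq σ]

variable (R d) in
/-- `MvPolynomial σ R` is free over its subring `R[X i ^ d i]`, with basis the monomials whose
exponents satisfy `e i < d i`; this map is the resulting isomorphism read from coordinates. -/
noncomputable def multiExpandAssemble :
    ((∀ i, Fin (d i)) → MvPolynomial σ R) →ₗ[R] MvPolynomial σ R where
  toFun g := ∑ j, prodXPow (fun i => (j i : ℕ)) * multiExpand d (g j)
  map_add' g h := by simp only [Pi.add_apply, map_add, mul_add, Finset.sum_add_distrib]
  map_smul' c g := by
    simp only [Pi.smul_apply, map_smul, mul_smul_comm, Finset.smul_sum, RingHom.id_apply]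

theorem multiExpandAssemble_apply (g : (∀ i, Fin (d i)) → MvPolynomial σ R) :
    multiExpandAssemble R d g = ∑ j, prodXPow (fun i => (j i : ℕ)) * multiExpand d (g j) :=
  rfl

theorem multiExpandAssemble_single (j : ∀ i, Fin (d i)) (g : MvPolynomial σ R) :
    multiExpandAssemble R d (Pi.single j g) = prodXPow (fun i => (j i : ℕ)) * multiExpand d g := by
  rw [multiExpandAssemble_apply, Finset.sum_eq_single j (fun j' _ hj' => by simp [hj'])
    (by simp)]
  simp

theorem multiExpandAssemble_comp_split (hd : ∀ i, 0 < d i) :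
    multiExpandAssemble R d ∘ₗ multiExpandSplit R d hd = LinearMap.id := by
  refine (basisMonomials σ R).ext fun a => ?_
  simp only [coe_basisMonomials, LinearMap.comp_apply, LinearMap.id_apply]
  rw [multiExpandSplit_monomial, multiExpandAssemble_single, multiExpand_prodXPow,
    prodXPow_mul_prodXPow, monomial_one_eq_prodXPow]
  congr 1
  funext i
  exact Nat.mod_add_div _ _

theorem multiExpandSplit_comp_assemble (hd : ∀ i, 0 < d i) :
    multiExpandSplit R d hd ∘ₗ multiExpandAssemble R d = LinearMap.id := by
  refine (Pi.basis fun _ => basisMonomials σ R).ext fun ⟨j, a⟩ => ?_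
  simp only [Pi.basis_apply, coe_basisMonomials, LinearMap.comp_apply, LinearMap.id_apply]
  rw [multiExpandAssemble_single, monomial_one_eq_prodXPow, multiExpand_prodXPow,
    prodXPow_mul_prodXPow, prodXPow_eq_monomial_one, multiExpandSplit_monomial]
  have hmod : ∀ i, ((j i : ℕ) + d i * a i) % d i = j i := fun i => by
    rw [Nat.add_mul_mod_self_left, Nat.mod_eq_of_lt (j i).isLt]
  have hdiv : ∀ i, ((j i : ℕ) + d i * a i) / d i = a i := fun i => by
    rw [Nat.add_mul_div_left _ _ (hd i), Nat.div_eq_of_lt (j i).isLt, zero_add]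
  simp only [Finsupp.coe_equivFunOnFinite_symm, Pi.add_apply, hmod, hdiv]

variable (R) in
noncomputable def multiExpandEquiv (hd : ∀ i, 0 < d i) :
    ((∀ i, Fin (d i)) → MvPolynomial σ R) ≃ₗ[R] MvPolynomial σ R :=
  .ofLinearMap _ _ (multiExpandAssemble_comp_split hd) (multiExpandSplit_comp_assemble hd)

theorem multiExpandEquiv_apply (hd : ∀ i, 0 < d i) (g : (∀ i, Fin (d i)) → MvPolynomial σ R) :
    multiExpandEquiv R hd g = ∑ j, prodXPow (fun i => (j i : ℕ)) * multiExpand d (g j) :=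
  rfl

theorem mul_multiExpand_mem_map_pi (hd : ∀ i, 0 < d i) (J : Ideal (MvPolynomial σ R))
    (f : MvPolynomial σ R) {g : MvPolynomial σ R} (hg : g ∈ J) :
    f * multiExpand d g ∈ (Submodule.pi Set.univ fun _ => J.restrictScalars R).map
      (multiExpandEquiv R hd : ((∀ i, Fin (d i)) → MvPolynomial σ R) →ₗ[R] MvPolynomial σ R) := by
  obtain ⟨c, rfl⟩ := (multiExpandEquiv R hd).surjective f
  refine ⟨fun j => c j * g, fun j _ => J.mul_mem_left (c j) hg, ?_⟩
  simp only [LinearEquiv.coe_coe, multiExpandEquiv_apply, Finset.sum_mul, map_mul, mul_assoc]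

theorem map_pi_multiExpandEquiv (hd : ∀ i, 0 < d i) (J : Ideal (MvPolynomial σ R)) :
    (Submodule.pi Set.univ fun _ => J.restrictScalars R).map
        (multiExpandEquiv R hd : ((∀ i, Fin (d i)) → MvPolynomial σ R) →ₗ[R] MvPolynomial σ R) =
      (J.map (multiExpand d)).restrictScalars R := by
  apply le_antisymm
  · rintro _ ⟨g, hg, rfl⟩
    exact Ideal.sum_mem _ fun j _ => Ideal.mul_mem_left _ _ (Ideal.mem_map_of_mem _ (hg j trivial))
  · intro x hx
    rw [Submodule.restrictScalars_mem, Ideal.map, Ideal.span] at hx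
    induction hx using Submodule.span_induction with
    | mem _ h =>
      obtain ⟨g, hg, rfl⟩ := h
      simpa using mul_multiExpand_mem_map_pi hd J 1 hg
    | zero => exact Submodule.zero_mem _
    | add _ _ _ _ hy hz => exact Submodule.add_mem _ hy hz
    | smul a _ _ hy =>
      obtain ⟨g, hg, rfl⟩ := hy
      simp only [LinearEquiv.coe_coe, multiExpandEquiv_apply, smul_eq_mul, Finset.mul_sum,
        ← mul_assoc]
      exact Submodule.sum_mem _ fun j _ => mul_multiExpand_mem_map_pi hd J _ (hg j trivial)

theorem finrank_quotient_map_multiExpand {F : Type*} [Field F] (hd : ∀ i, 0 < d i)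
    (J : Ideal (MvPolynomial σ F)) [Module.Finite F (MvPolynomial σ F ⧸ J)] :
    Module.finrank F (MvPolynomial σ F ⧸ J.map (multiExpand d)) =
      (∏ i, d i) * Module.finrank F (MvPolynomial σ F ⧸ J) := by
  have hJ := Submodule.Quotient.restrictScalarsEquiv F J
  have : Module.Finite F (MvPolynomial σ F ⧸ J.restrictScalars F) := .equiv hJ.symm
  calc Module.finrank F (MvPolynomial σ F ⧸ J.map (multiExpand d))
      = Module.finrank F (((∀ i, Fin (d i)) → MvPolynomial σ F) ⧸
          Submodule.pi Set.univ fun _ => J.restrictScalars F) :=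
        ((Submodule.Quotient.equiv _ _ (multiExpandEquiv F hd) (map_pi_multiExpandEquiv hd J)).trans
          (Submodule.Quotient.restrictScalarsEquiv F _)).finrank_eq.symm
    _ = ∑ _j : ∀ i, Fin (d i), Module.finrank F (MvPolynomial σ F ⧸ J.restrictScalars F) := by
        rw [(Submodule.quotientPi _).finrank_eq, Module.finrank_pi_fintype]
    _ = (∏ i, d i) * Module.finrank F (MvPolynomial σ F ⧸ J) := by
        simp [hJ.finrank_eq]

end MvPolynomial

open MvPolynomial

section Ideals

variable (R : Type*) [CommRing R] {σ : Type*} [Fintype σ]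

noncomputable def hyperplaneIdeal (k : σ → ℕ) : Ideal (MvPolynomial σ R) :=
  Ideal.span (insert (∑ i, X i) (Set.range fun i => X i ^ k i))

noncomputable def hkColengthIdeal (d : σ → ℕ) (q : ℕ) : Ideal (MvPolynomial σ R) :=
  Ideal.span (insert (∑ i, X i ^ d i) (Set.range fun i => X i ^ q))

noncomputable def DcolengthIdeal (s : ℕ) (k : Fin (s + 1) → ℕ) : Ideal (MvPolynomial (Fin s) R) :=
  Ideal.span (Set.range (fun i : Fin s => X i ^ k i.castSucc) ∪ {(∑ i, X i) ^ k (Fin.last s)})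

variable {R}

instance (k : σ → ℕ) : Module.Finite R (MvPolynomial σ R ⧸ hyperplaneIdeal R k) :=
  finite_quotient_span_insert_range_X_pow _ _

instance (d : σ → ℕ) (q : ℕ) :
    Module.Finite R (MvPolynomial σ R ⧸ hkColengthIdeal R d q) :=
  finite_quotient_span_insert_range_X_pow _ fun _ => q

instance (s : ℕ) (k : Fin (s + 1) → ℕ) :
    Module.Finite R (MvPolynomial (Fin s) R ⧸ DcolengthIdeal R s k) :=
  finite_quotient_of_X_pow_mem (fun i => k i.castSucc) fun i =>
    Ideal.subset_span (Or.inl ⟨i, rfl⟩)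

end Ideals

theorem hkColength_eq_finrank (R : Type) [CommRing R] (m : ℕ) (d : Fin m → ℕ) (q : ℕ) :
    hkColength R m d q = Module.finrank R (MvPolynomial (Fin m) R ⧸ hkColengthIdeal R d q) :=
  rfl

theorem Dcolength_eq_finrank (R : Type) [CommRing R] (s : ℕ) (k : Fin (s + 1) → ℕ) :
    Dcolength R s k = Module.finrank R (MvPolynomial (Fin s) R ⧸ DcolengthIdeal R s k) :=
  rfl

section Elimination

variable {R : Type*} [CommRing R] {s : ℕ}

variable (R s) in
/-- Parametrizes the hyperplane `∑ i, x i = 0` of `R^(s+1)` by its first `s` coordinates. -/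
noncomputable def hyperplaneChart : MvPolynomial (Fin (s + 1)) R →ₐ[R] MvPolynomial (Fin s) R :=
  aeval (Fin.snoc X (-∑ j, X j))

@[simp]
theorem hyperplaneChart_X_castSucc (i : Fin s) :
    hyperplaneChart R s (X i.castSucc) = X i := by
  simp [hyperplaneChart]

@[simp]
theorem hyperplaneChart_X_last : hyperplaneChart R s (X (Fin.last s)) = -∑ j, X j := by
  simp [hyperplaneChart]

theorem hyperplaneChart_comp_rename :
    (hyperplaneChart R s).comp (rename Fin.castSucc) = AlgHom.id R _ :=
  algHom_ext fun i => by simp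

theorem mk_hyperplaneIdeal_sum_X_castSucc (k : Fin (s + 1) → ℕ) :
    Ideal.Quotient.mk (hyperplaneIdeal R k) (∑ j : Fin s, X j.castSucc) =
      -Ideal.Quotient.mk (hyperplaneIdeal R k) (X (Fin.last s)) := by
  have hsum : Ideal.Quotient.mk (hyperplaneIdeal R k) (∑ i, X i) = 0 :=
    Ideal.Quotient.eq_zero_iff_mem.2 (Ideal.subset_span (Set.mem_insert _ _))
  rw [Fin.sum_univ_castSucc, map_add] at hsum
  exact eq_neg_of_add_eq_zero_left hsum

theorem hyperplaneIdeal_le_comap (k : Fin (s + 1) → ℕ) :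
    hyperplaneIdeal R k ≤ (DcolengthIdeal R s k).comap (hyperplaneChart R s) := by
  rw [hyperplaneIdeal, Ideal.span_le]
  rintro _ (rfl | ⟨i, rfl⟩)
  · simp [Fin.sum_univ_castSucc]
  · rw [SetLike.mem_coe, Ideal.mem_comap, map_pow]
    induction i using Fin.lastCases with
    | last =>
      rw [hyperplaneChart_X_last, neg_pow]
      exact Ideal.mul_mem_left _ _ (Ideal.subset_span (Or.inr rfl))
    | cast i =>
      rw [hyperplaneChart_X_castSucc]
      exact Ideal.subset_span (Or.inl ⟨i, rfl⟩)

theorem DcolengthIdeal_le_comap_rename (k : Fin (s + 1) → ℕ) :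
    DcolengthIdeal R s k ≤ (hyperplaneIdeal R k).comap (rename Fin.castSucc) := by
  rw [DcolengthIdeal, Ideal.span_le]
  rintro _ (⟨i, rfl⟩ | rfl) <;> rw [SetLike.mem_coe, Ideal.mem_comap, map_pow]
  · rw [rename_X]
    exact Ideal.subset_span (Set.mem_insert_of_mem _ ⟨i.castSucc, rfl⟩)
  · rw [map_sum, ← Ideal.Quotient.eq_zero_iff_mem, map_pow]
    simp only [rename_X]
    rw [mk_hyperplaneIdeal_sum_X_castSucc, ← map_neg, ← map_pow, Ideal.Quotient.eq_zero_iff_mem,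
      neg_pow]
    exact Ideal.mul_mem_left _ _ (Ideal.subset_span (Set.mem_insert_of_mem _ ⟨Fin.last s, rfl⟩))

theorem mkₐ_comp_rename_comp_hyperplaneChart (k : Fin (s + 1) → ℕ) :
    (Ideal.Quotient.mkₐ R (hyperplaneIdeal R k)).comp
        ((rename Fin.castSucc).comp (hyperplaneChart R s)) =
      Ideal.Quotient.mkₐ R (hyperplaneIdeal R k) := by
  refine algHom_ext fun i => ?_
  induction i using Fin.lastCases with
  | last =>
    simp only [AlgHom.comp_apply, hyperplaneChart_X_last, map_neg, map_sum, rename_X,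
      Ideal.Quotient.mkₐ_eq_mk]
    rw [← map_sum, mk_hyperplaneIdeal_sum_X_castSucc, neg_neg]
  | cast i => simp

end Elimination

theorem finrank_quotient_hyperplaneIdeal (R : Type) [CommRing R] {s : ℕ} (k : Fin (s + 1) → ℕ) :
    Module.finrank R (MvPolynomial (Fin (s + 1)) R ⧸ hyperplaneIdeal R k) = Dcolength R s k :=
  (Ideal.quotientEquivAlgOfInverse _ _ (hyperplaneIdeal_le_comap k)
    (DcolengthIdeal_le_comap_rename k)
    (by rw [hyperplaneChart_comp_rename, AlgHom.comp_id])
    (mkₐ_comp_rename_comp_hyperplaneChart k)).toLinearEquiv.finrank_eq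

section Sandwich

variable {R : Type*} [CommRing R] {σ : Type*}

theorem span_insert_range_X_pow_mono (a : MvPolynomial σ R) {m n : σ → ℕ}
    (h : ∀ i, m i ≤ n i) :
    Ideal.span (insert a (Set.range fun i => X i ^ n i)) ≤
      Ideal.span (insert a (Set.range fun i => X i ^ m i)) := by
  refine Ideal.span_le.2 (Set.insert_subset (Ideal.subset_span (Set.mem_insert _ _)) ?_)
  rintro _ ⟨i, rfl⟩
  exact Ideal.pow_mem_of_pow_mem _ (Ideal.subset_span (Set.mem_insert_of_mem _ ⟨i, rfl⟩)) (h i)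

theorem map_multiExpand_hyperplaneIdeal [Fintype σ] (d k : σ → ℕ) :
    (hyperplaneIdeal R k).map (multiExpand d) =
      Ideal.span (insert (∑ i, X i ^ d i) (Set.range fun i => X i ^ (d i * k i))) := by
  rw [hyperplaneIdeal, Ideal.map_span, Set.image_insert_eq, ← Set.range_comp]
  simp only [map_sum, map_pow, multiExpand_X, Function.comp_def, pow_mul]

variable {F : Type} [Field F] {s : ℕ} {d k : Fin (s + 1) → ℕ} {q : ℕ}

theorem prod_mul_Dcolength_le_hkColength (hd : ∀ i, 0 < d i) (hk : ∀ i, d i * k i ≤ q) :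
    (∏ i, d i) * Dcolength F s k ≤ hkColength F (s + 1) d q := by
  rw [← finrank_quotient_hyperplaneIdeal, ← finrank_quotient_map_multiExpand hd,
    hkColength_eq_finrank]
  apply Ideal.finrank_quotient_le_of_le
  rw [map_multiExpand_hyperplaneIdeal]
  exact span_insert_range_X_pow_mono _ hk

theorem hkColength_le_prod_mul_Dcolength (hd : ∀ i, 0 < d i) (hk : ∀ i, q ≤ d i * k i) :
    hkColength F (s + 1) d q ≤ (∏ i, d i) * Dcolength F s k := by
  rw [← finrank_quotient_hyperplaneIdeal, ← finrank_quotient_map_multiExpand hd,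
    hkColength_eq_finrank, map_multiExpand_hyperplaneIdeal]
  have := finite_quotient_span_insert_range_X_pow (R := F) (∑ i, X i ^ d i) fun i => d i * k i
  exact Ideal.finrank_quotient_le_of_le (span_insert_range_X_pow_mono _ hk)

end Sandwich

section Frobenius

variable {R : Type*} [CommRing R] (p : ℕ) [ExpChar R p]

theorem DcolengthIdeal_pow_mul (s t : ℕ) (k : Fin (s + 1) → ℕ) :
    DcolengthIdeal R s (fun i => p ^ t * k i) =
      (DcolengthIdeal R s k).map (multiExpand fun _ => p ^ t) := by
  rw [DcolengthIdeal, DcolengthIdeal, Ideal.map_span, Set.image_union, Set.image_singleton,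
    ← Set.range_comp]
  simp only [Function.comp_def, map_pow, map_sum, multiExpand_X, pow_mul,
    ← sum_pow_char_pow]

theorem Dcolength_pow_mul {F : Type} [Field F] [ExpChar F p] (s t : ℕ) (k : Fin (s + 1) → ℕ) :
    Dcolength F s (fun i => p ^ t * k i) = (p ^ t) ^ s * Dcolength F s k := by
  rw [Dcolength_eq_finrank, DcolengthIdeal_pow_mul,
    finrank_quotient_map_multiExpand fun _ => pow_pos (expChar_pos F p) t, Finset.prod_const,
    Finset.card_univ, Fintype.card_fin, Dcolength_eq_finrank]

end Frobenius

theorem statement0_general (s : ℕ) (d : Fin (s+1) → ℕ) (hd : ∀ i, 2 ≤ d i)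
    (p : ℕ) (hp : p.Prime) (n : ℕ) (hn : 1 ≤ n) :
    (∏ i, (d i : ℝ)) * (Dcolength (ZMod p) s (fun i => p / d i) : ℝ) / (p : ℝ) ^ s
        ≤ (hkColength (ZMod p) (s+1) d (p ^ n) : ℝ) / ((p : ℝ) ^ n) ^ s ∧
      (hkColength (ZMod p) (s+1) d (p ^ n) : ℝ) / ((p : ℝ) ^ n) ^ s
        ≤ (∏ i, (d i : ℝ)) * (Dcolength (ZMod p) s (fun i => p / d i + 1) : ℝ) / (p : ℝ) ^ s := by
  have : Fact p.Prime := ⟨hp⟩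
  obtain ⟨t, rfl⟩ : ∃ t, n = t + 1 := ⟨n - 1, by omega⟩
  have hd₀ : ∀ i, 0 < d i := fun i => zero_lt_two.trans_le (hd i)
  have lower := prod_mul_Dcolength_le_hkColength (F := ZMod p) (k := fun i => p ^ t * (p / d i))
    (q := p ^ (t + 1)) hd₀ fun i => by
      rw [mul_left_comm, pow_succ]; exact Nat.mul_le_mul_left _ (Nat.mul_div_le p (d i))
  have upper := hkColength_le_prod_mul_Dcolength (F := ZMod p)
    (k := fun i => p ^ t * (p / d i + 1)) (q := p ^ (t + 1)) hd₀ fun i => by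
      rw [mul_left_comm, pow_succ]; exact Nat.mul_le_mul_left _ (Nat.lt_mul_div_succ p (hd₀ i)).le
  rw [Dcolength_pow_mul] at lower upper
  have hp₀ : (0 : ℝ) < p := mod_cast hp.pos
  have hq : ((p : ℝ) ^ (t + 1)) ^ s = ((p : ℝ) ^ t) ^ s * (p : ℝ) ^ s := by ring
  rw [hq, ← div_div, div_le_div_iff_of_pos_right (by positivity),
    div_le_div_iff_of_pos_right (by positivity), le_div_iff₀ (by positivity),
    div_le_iff₀ (by positivity)]
  constructor
  · calc _ = (((∏ i, d i) * ((p ^ t) ^ s * Dcolength (ZMod p) s fun i => p / d i) : ℕ) : ℝ) := by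
          push_cast; ring
      _ ≤ _ := by exact_mod_cast lower
  · calc _ ≤ (((∏ i, d i) * ((p ^ t) ^ s * Dcolength (ZMod p) s fun i => p / d i + 1) : ℕ) : ℝ) :=
          by exact_mod_cast upper
      _ = _ := by push_cast; ring

/-- Gessel–Monsky inequalities: for a diagonal hypersurface in `s+1 ≥ 2` variables
with exponents `d i ≥ 2`, every prime `p` exceeding all `d i`, and every `n ≥ 1`
(with `q = p^n`), the normalized colength of the Frobenius power of the maximal
ideal is squeezed between the two Han–Monsky `D`-terms. -/
theorem statement0 (s : ℕ) (hs : 1 ≤ s) (d : Fin (s+1) → ℕ) (hd : ∀ i, 2 ≤ d i)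
    (p : ℕ) (hp : p.Prime) (hpd : ∀ i, d i < p) (n : ℕ) (hn : 1 ≤ n) :
    (∏ i, (d i : ℝ)) * (Dcolength (ZMod p) s (fun i => p / d i) : ℝ) / (p : ℝ) ^ s
        ≤ (hkColength (ZMod p) (s+1) d (p ^ n) : ℝ) / ((p : ℝ) ^ n) ^ s ∧
      (hkColength (ZMod p) (s+1) d (p ^ n) : ℝ) / ((p : ℝ) ^ n) ^ s
        ≤ (∏ i, (d i : ℝ)) * (Dcolength (ZMod p) s (fun i => p / d i + 1) : ℝ) / (p : ℝ) ^ s :=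
  statement0_general s d hd p hp n hn
end

section
/- Let s ≥ 2 and d_1, …, d_s ≥ 2 be integers and let p be a prime with p > max_i d_i. If e_p is a real number such that dim_{F}(R_p/𝔪_p^{[p^n]})/p^{n(s−1)} converges to e_p as n → ∞, then d_1⋯d_s · D_{F}(⌊p/d_1⌋, …, ⌊p/d_s⌋)/p^{s−1} ≤ e_p ≤ d_1⋯d_s · D_{F}(⌊p/d_1⌋+1, …, ⌊p/d_s⌋+1)/p^{s−1}, where F = ℤ/pℤ. -/
/-!
For a field `F` and exponents `e i > 0`, the substitution `X i ↦ X i ^ e i` makes `F[X]` a free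
module of rank `∏ e i` over itself, with basis the monomials `X ^ a`, `a < e`; hence extending an
ideal of finite colength along it multiplies the colength by `∏ e i`. With `e = d` this gives
`dim F[X] / (∑ X i ^ d i, X i ^ (d i * m i)) = (∏ d i) * dim F[X] / (∑ X i, X i ^ m i)`, and
eliminating one variable by the linear relation identifies the last quotient with the one defining
`D_F(m)`. With `e = (p, …, p)` in characteristic `p`, where `(∑ X i) ^ (p k) = (∑ X i ^ p) ^ k`, it
gives `D_F(p k) = p ^ s * D_F(k)`. Now `d i * ⌊q / d i⌋ ≤ q < d i * (⌊q / d i⌋ + 1)` squeezes the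
colength at `q = p ^ (n + 1)` between `(∏ d i) * D_F(⌊q / d i⌋)` and `(∏ d i) * D_F(⌊q / d i⌋ + 1)`,
and `p ^ n * ⌊p / d⌋ ≤ ⌊p ^ (n + 1) / d⌋ < p ^ n * (⌊p / d⌋ + 1)` turns these into
`p ^ ((n + 1) s)` times the two bounds of the theorem, for every `n`; they pass to the limit.
-/

open MvPolynomial Filter

namespace HanMonsky

noncomputable section

section Generalities

variable {F : Type} [Field F] {σ : Type} [Fintype σ]

lemma finiteDimensional_quotient_of_X_pow_mem (I : Ideal (MvPolynomial σ F)) (N : σ → ℕ)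
    (h : ∀ i, (X i : MvPolynomial σ F) ^ N i ∈ I) :
    FiniteDimensional F (MvPolynomial σ F ⧸ I) := by
  have hint : ∀ x ∈ Set.range fun i => Ideal.Quotient.mk I (X i), IsIntegral F x := by
    rintro _ ⟨i, rfl⟩
    refine IsIntegral.of_pow (Nat.succ_pos (N i)) ?_
    rw [← map_pow, Ideal.Quotient.eq_zero_iff_mem.mpr (pow_succ (X i : MvPolynomial σ F) (N i) ▸
      I.mul_mem_right _ (h i))]
    exact isIntegral_zero
  have htop : Algebra.adjoin F (Set.range fun i => Ideal.Quotient.mk I (X i)) = ⊤ := by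
    rw [← Ideal.Quotient.mkₐ_eq_mk F, Set.range_comp', Algebra.adjoin_image, adjoin_range_X,
      Algebra.map_top, AlgHom.range_eq_top]
    exact Ideal.Quotient.mkₐ_surjective F I
  have := fg_adjoin_of_finite (Set.finite_range _) hint
  rw [htop, Algebra.top_toSubmodule] at this
  exact Module.Finite.of_fg_top this

lemma finrank_quotient_le_of_le {R : Type} [CommRing R] [Algebra F R] {I J : Ideal R} (h : I ≤ J)
    [FiniteDimensional F (R ⧸ I)] :
    Module.finrank F (R ⧸ J) ≤ Module.finrank F (R ⧸ I) :=
  LinearMap.finrank_le_finrank_of_surjective (f := (Ideal.Quotient.factorₐ F h).toLinearMap)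
    (Ideal.Quotient.factor_surjective h)

end Generalities

section ExpandVars

variable {F : Type} [Field F] {σ : Type} [Fintype σ] {e : σ → ℕ}

abbrev ExpBelow (e : σ → ℕ) := ∀ i, Fin (e i)

def ExpBelow.toFinsupp (a : ExpBelow e) : σ →₀ ℕ :=
  Finsupp.equivFunOnFinite.symm fun i => a i

def ExpBelow.ofMod (he : ∀ i, 0 < e i) (m : σ →₀ ℕ) : ExpBelow e :=
  fun i => ⟨m i % e i, Nat.mod_lt _ (he i)⟩

def expMul (e : σ → ℕ) (m : σ →₀ ℕ) : σ →₀ ℕ :=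
  Finsupp.equivFunOnFinite.symm fun i => e i * m i

def expDiv (e : σ → ℕ) (m : σ →₀ ℕ) : σ →₀ ℕ :=
  Finsupp.equivFunOnFinite.symm fun i => m i / e i

@[simp] lemma ExpBelow.toFinsupp_apply (a : ExpBelow e) (i : σ) : a.toFinsupp i = a i := rfl
@[simp] lemma expMul_apply (m : σ →₀ ℕ) (i : σ) : expMul e m i = e i * m i := rfl
@[simp] lemma expDiv_apply (m : σ →₀ ℕ) (i : σ) : expDiv e m i = m i / e i := rfl

@[simp] lemma expDiv_toFinsupp (a : ExpBelow e) : expDiv e a.toFinsupp = 0 := by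
  ext i; simp [Nat.div_eq_of_lt (a i).isLt]

variable (F e) in
def expandVars : MvPolynomial σ F →ₐ[F] MvPolynomial σ F :=
  aeval fun i => X i ^ e i

omit [Fintype σ] in
lemma expandVars_X (i : σ) : expandVars F e (X i) = X i ^ e i := aeval_X _ i

lemma expandVars_monomial (m : σ →₀ ℕ) (c : F) :
    expandVars F e (monomial m c) = monomial (expMul e m) c := by
  simp only [expandVars, monomial_eq, Finsupp.prod_fintype _ _ (fun _ => pow_zero _), map_mul,
    aeval_C, map_prod, map_pow, aeval_X, ← pow_mul, expMul_apply, algebraMap_eq]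

variable (he : ∀ i, 0 < e i)
include he

lemma ExpBelow.ofMod_add_expMul (m b : σ →₀ ℕ) :
    ExpBelow.ofMod he (m + expMul e b) = ExpBelow.ofMod he m := by
  funext i; simp [ExpBelow.ofMod, Nat.add_mul_mod_self_left]

lemma expDiv_add_expMul (m b : σ →₀ ℕ) : expDiv e (m + expMul e b) = expDiv e m + b := by
  ext i; simp [Nat.add_mul_div_left _ _ (he i)]

@[simp] lemma ExpBelow.ofMod_toFinsupp (a : ExpBelow e) : ExpBelow.ofMod he a.toFinsupp = a := by
  funext i; simp [ExpBelow.ofMod, Nat.mod_eq_of_lt (a i).isLt]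

lemma ExpBelow.toFinsupp_ofMod_add_expMul_expDiv (m : σ →₀ ℕ) :
    (ExpBelow.ofMod he m).toFinsupp + expMul e (expDiv e m) = m := by
  ext i; simpa [ExpBelow.ofMod] using Nat.mod_add_div (m i) (e i)

/-- The coefficient of `X^a` in the decomposition `f = ∑_a X^a * expandVars (component he a f)`. -/
def component (a : ExpBelow e) : MvPolynomial σ F →ₗ[F] MvPolynomial σ F :=
  (basisMonomials σ F).constr F fun m =>
    if ExpBelow.ofMod he m = a then monomial (expDiv e m) 1 else 0

lemma component_monomial (a : ExpBelow e) (m : σ →₀ ℕ) (c : F) :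
    component he a (monomial m c) =
      if ExpBelow.ofMod he m = a then monomial (expDiv e m) c else 0 := by
  have hm : monomial m c = c • basisMonomials σ F m := by
    rw [coe_basisMonomials, smul_monomial, smul_eq_mul, mul_one]
  rw [hm, map_smul, component, Module.Basis.constr_basis]
  split_ifs <;> simp [smul_monomial]

lemma component_expandVars_mul (a : ExpBelow e) (g x : MvPolynomial σ F) :
    component he a (expandVars F e g * x) = g * component he a x := by
  induction g using MvPolynomial.induction_on' with
  | add p q hp hq => rw [map_add, add_mul, map_add, hp, hq, add_mul]
  | monomial b c =>
    induction x using MvPolynomial.induction_on' with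
    | add p q hp hq => rw [mul_add, map_add, hp, hq, map_add, mul_add]
    | monomial m c' =>
      rw [expandVars_monomial, monomial_mul, component_monomial, component_monomial,
        add_comm (expMul e b), ExpBelow.ofMod_add_expMul he, expDiv_add_expMul he,
        add_comm (expDiv e m)]
      split_ifs
      · rw [monomial_mul]
      · rw [mul_zero]

lemma component_monomial_mul_expandVars (a a' : ExpBelow e) (g : MvPolynomial σ F) :
    component he a' (monomial a.toFinsupp 1 * expandVars F e g) = if a = a' then g else 0 := by
  rw [mul_comm, component_expandVars_mul, component_monomial, ExpBelow.ofMod_toFinsupp he,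
    expDiv_toFinsupp]
  split_ifs <;> simp

variable [DecidableEq σ]

lemma component_monomial_mul (a a' : ExpBelow e) (x : MvPolynomial σ F) :
    component he a (monomial a'.toFinsupp 1 * x) =
      ∑ b : ExpBelow e, (if ExpBelow.ofMod he (a'.toFinsupp + b.toFinsupp) = a then
          monomial (expDiv e (a'.toFinsupp + b.toFinsupp)) (1 : F) else 0) * component he b x := by
  induction x using MvPolynomial.induction_on' with
  | add p q hp hq =>
      simp only [mul_add, map_add, hp, hq, Finset.sum_add_distrib]
  | monomial m c =>
    simp only [component_monomial, mul_ite, mul_zero, Finset.sum_ite_eq, Finset.mem_univ,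
      if_true, one_mul, monomial_mul]
    have hm : a'.toFinsupp + m =
        (a'.toFinsupp + (ExpBelow.ofMod he m).toFinsupp) + expMul e (expDiv e m) := by
      rw [add_assoc, ExpBelow.toFinsupp_ofMod_add_expMul_expDiv he]
    rw [hm, ExpBelow.ofMod_add_expMul he, expDiv_add_expMul he]
    split_ifs <;> simp [monomial_mul]

lemma sum_monomial_mul_expandVars_component (f : MvPolynomial σ F) :
    ∑ a : ExpBelow e, monomial a.toFinsupp 1 * expandVars F e (component he a f) = f := by
  induction f using MvPolynomial.induction_on' with
  | add p q hp hq =>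
      conv_rhs => rw [← hp, ← hq]
      simp only [map_add, mul_add, Finset.sum_add_distrib]
  | monomial m c =>
    simp only [component_monomial, apply_ite (expandVars F e), map_zero, mul_ite, mul_zero,
      Finset.sum_ite_eq, Finset.mem_univ, if_true, expandVars_monomial, monomial_mul, one_mul,
      ExpBelow.toFinsupp_ofMod_add_expMul_expDiv he]

lemma component_sum_monomial_mul_expandVars (a' : ExpBelow e) (f : ExpBelow e → MvPolynomial σ F) :
    component he a' (∑ a : ExpBelow e, monomial a.toFinsupp 1 * expandVars F e (f a)) = f a' := by
  simp [map_sum, component_monomial_mul_expandVars]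

lemma component_mem_of_mem_map_expandVars (I : Ideal (MvPolynomial σ F)) {x : MvPolynomial σ F}
    (hx : x ∈ I.map (expandVars F e)) (a : ExpBelow e) : component he a x ∈ I := by
  induction hx using Submodule.span_induction generalizing a with
  | mem y hy =>
      obtain ⟨g, hg, rfl⟩ := hy
      rw [← mul_one (expandVars F e g), component_expandVars_mul]
      exact I.mul_mem_right _ hg
  | zero => simp
  | add x y _ _ hx hy => rw [map_add]; exact add_mem (hx a) (hy a)
  | smul r x _ hx =>
      rw [smul_eq_mul, ← sum_monomial_mul_expandVars_component he r, Finset.sum_mul, map_sum]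
      refine Submodule.sum_mem _ fun b _ => ?_
      rw [mul_assoc, component_monomial_mul]
      refine Submodule.sum_mem _ fun c _ => ?_
      rw [component_expandVars_mul]
      exact I.mul_mem_left _ (I.mul_mem_left _ (hx c))

variable (e) in
/-- `F[X]` is free over `F[X^e]` on the monomials `X^a`, `a < e`; taking components identifies
`F[X] / I F[X]` with `(F[X] / I)^{∏ e}`. -/
def quotientMapExpandVarsEquiv (I : Ideal (MvPolynomial σ F)) :
    (MvPolynomial σ F ⧸ I.map (expandVars F e)) ≃ₗ[F] (ExpBelow e → MvPolynomial σ F ⧸ I) := by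
  let Ie := I.map (expandVars F e)
  let Ψ₀ : MvPolynomial σ F →ₗ[F] (ExpBelow e → MvPolynomial σ F ⧸ I) :=
    LinearMap.pi fun a => (Ideal.Quotient.mkₐ F I).toLinearMap ∘ₗ component he a
  have hker : Ie.restrictScalars F ≤ LinearMap.ker Ψ₀ := fun x hx => by
    ext a
    exact Ideal.Quotient.eq_zero_iff_mem.mpr (component_mem_of_mem_map_expandVars he I hx a)
  let Ψ := (Submodule.liftQ _ Ψ₀ hker) ∘ₗ
    (Submodule.Quotient.restrictScalarsEquiv F Ie).symm.toLinearMap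
  have hΨ (f : MvPolynomial σ F) :
      Ψ (Ideal.Quotient.mk Ie f) = fun a => Ideal.Quotient.mk I (component he a f) := rfl
  refine LinearEquiv.ofBijective Ψ ⟨(injective_iff_map_eq_zero Ψ).mpr fun x hx => ?_, fun g => ?_⟩
  · obtain ⟨f, rfl⟩ := Ideal.Quotient.mk_surjective x
    have hf (a : ExpBelow e) : component he a f ∈ I :=
      Ideal.Quotient.eq_zero_iff_mem.mp (congrFun ((hΨ f).symm.trans hx) a)
    rw [Ideal.Quotient.eq_zero_iff_mem, ← sum_monomial_mul_expandVars_component he f]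
    exact Submodule.sum_mem _ fun a _ => Ie.mul_mem_left _ (Ideal.mem_map_of_mem _ (hf a))
  · choose f hf using fun a => Ideal.Quotient.mk_surjective (g a)
    refine ⟨Ideal.Quotient.mk Ie (∑ a, monomial a.toFinsupp 1 * expandVars F e (f a)), ?_⟩
    ext a
    simp only [hΨ, component_sum_monomial_mul_expandVars, hf]

lemma finrank_quotient_map_expandVars (I : Ideal (MvPolynomial σ F))
    [FiniteDimensional F (MvPolynomial σ F ⧸ I)] :
    Module.finrank F (MvPolynomial σ F ⧸ I.map (expandVars F e)) =
      (∏ i, e i) * Module.finrank F (MvPolynomial σ F ⧸ I) := by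
  rw [(quotientMapExpandVarsEquiv e he I).finrank_eq, Module.finrank_pi_fintype,
    Finset.sum_const, Finset.card_univ, smul_eq_mul, Fintype.card_pi]
  simp

end ExpandVars

section Colengths

variable (F : Type) [Field F] {σ : Type}

def spanInsertXPow (f : MvPolynomial σ F) (c : σ → ℕ) : Ideal (MvPolynomial σ F) :=
  Ideal.span (insert f (Set.range fun i => X i ^ c i))

variable {F}

lemma X_pow_mem_spanInsertXPow (f : MvPolynomial σ F) (c : σ → ℕ) (i : σ) :
    X i ^ c i ∈ spanInsertXPow F f c :=
  Ideal.subset_span (Set.mem_insert_of_mem _ ⟨i, rfl⟩)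

lemma mem_spanInsertXPow_self (f : MvPolynomial σ F) (c : σ → ℕ) : f ∈ spanInsertXPow F f c :=
  Ideal.subset_span (Set.mem_insert _ _)

instance [Fintype σ] (f : MvPolynomial σ F) (c : σ → ℕ) :
    FiniteDimensional F (MvPolynomial σ F ⧸ spanInsertXPow F f c) :=
  finiteDimensional_quotient_of_X_pow_mem _ c (X_pow_mem_spanInsertXPow f c)

lemma finrank_quotient_spanInsertXPow_mono [Fintype σ] (f : MvPolynomial σ F) {c c' : σ → ℕ}
    (h : c ≤ c') :
    Module.finrank F (MvPolynomial σ F ⧸ spanInsertXPow F f c) ≤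
      Module.finrank F (MvPolynomial σ F ⧸ spanInsertXPow F f c') := by
  refine finrank_quotient_le_of_le (Ideal.span_le.mpr ?_)
  rintro _ (hg | ⟨i, rfl⟩)
  · exact hg ▸ mem_spanInsertXPow_self f c
  · exact Ideal.pow_mem_of_pow_mem _ (X_pow_mem_spanInsertXPow f c i) (h i)

variable (F) in
def dIdeal (s : ℕ) (k : Fin (s+1) → ℕ) : Ideal (MvPolynomial (Fin s) F) :=
  Ideal.span (Set.range (fun i : Fin s => (X i : MvPolynomial (Fin s) F) ^ k i.castSucc) ∪
    {(∑ i : Fin s, (X i : MvPolynomial (Fin s) F)) ^ k (Fin.last s)})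

lemma Dcolength_eq_finrank (s : ℕ) (k : Fin (s+1) → ℕ) :
    Dcolength F s k = Module.finrank F (MvPolynomial (Fin s) F ⧸ dIdeal F s k) := rfl

lemma finrank_quotient_spanInsertXPow_sum_X (s : ℕ) (m : Fin (s+1) → ℕ) :
    Module.finrank F (MvPolynomial (Fin (s+1)) F ⧸ spanInsertXPow F (∑ i, X i) m) =
      Dcolength F s m := by
  set I₁ := spanInsertXPow F (∑ i, (X i : MvPolynomial (Fin (s+1)) F)) m
  set I₂ := dIdeal F s m
  -- `φ` eliminates `X_last` by `∑ X_i = 0`; its section `ψ` inverts it modulo `I₁`.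
  let φ : MvPolynomial (Fin (s+1)) F →ₐ[F] MvPolynomial (Fin s) F :=
    aeval (Fin.lastCases (-∑ j, X j) X)
  let ψ : MvPolynomial (Fin s) F →ₐ[F] MvPolynomial (Fin (s+1)) F := rename Fin.castSucc
  have hφψ (x : MvPolynomial (Fin s) F) : φ (ψ x) = x := by
    simp only [φ, ψ, aeval_rename, Function.comp_def, Fin.lastCases_castSucc, aeval_X_left_apply]
  have hsum_castSucc : Ideal.Quotient.mk I₁ (∑ j : Fin s, X j.castSucc) =
      -Ideal.Quotient.mk I₁ (X (Fin.last s)) := by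
    rw [eq_neg_iff_add_eq_zero, ← map_add, ← Fin.sum_univ_castSucc,
      Ideal.Quotient.eq_zero_iff_mem]
    exact mem_spanInsertXPow_self _ m
  have hψφ (x : MvPolynomial (Fin (s+1)) F) :
      Ideal.Quotient.mk I₁ (ψ (φ x)) = Ideal.Quotient.mk I₁ x := by
    change (Ideal.Quotient.mkₐ F I₁).comp (ψ.comp φ) x = Ideal.Quotient.mkₐ F I₁ x
    congr 1
    refine MvPolynomial.algHom_ext fun i => ?_
    induction i using Fin.lastCases with
    | cast j => simp [φ, ψ]
    | last => simp [φ, ψ, map_sum, hsum_castSucc]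
  have hle : I₁ ≤ I₂.comap φ := by
    refine Ideal.span_le.mpr ?_
    rintro _ (rfl | ⟨i, rfl⟩)
    · simp [φ, map_sum, Fin.sum_univ_castSucc]
    · induction i using Fin.lastCases with
      | cast j => exact Ideal.subset_span (Or.inl ⟨j, by simp [φ]⟩)
      | last =>
        simp only [SetLike.mem_coe, Ideal.mem_comap, map_pow, φ, aeval_X, Fin.lastCases_last]
        rw [neg_pow]
        exact Ideal.mul_mem_left _ _ (Ideal.subset_span (Or.inr rfl))
  have hψ : I₂ ≤ I₁.comap ψ := by
    refine Ideal.span_le.mpr ?_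
    rintro _ (⟨j, rfl⟩ | rfl)
    · simpa [ψ] using X_pow_mem_spanInsertXPow _ m j.castSucc
    · have hψ_sum : ψ (∑ i, X i) = ∑ j : Fin s, X j.castSucc := by simp [ψ]
      rw [SetLike.mem_coe, Ideal.mem_comap, ← Ideal.Quotient.eq_zero_iff_mem, map_pow, hψ_sum,
        map_pow, hsum_castSucc]
      refine (neg_pow (Ideal.Quotient.mk I₁ (X (Fin.last s))) _).trans ?_
      rw [← map_pow, Ideal.Quotient.eq_zero_iff_mem.mpr (X_pow_mem_spanInsertXPow _ m _), mul_zero]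
  have hge : I₂.comap φ ≤ I₁ := fun x hx => by
    rw [← Ideal.Quotient.eq_zero_iff_mem, ← hψφ, Ideal.Quotient.eq_zero_iff_mem]
    exact hψ hx
  rw [Dcolength_eq_finrank]
  exact (AlgEquiv.ofBijective (Ideal.quotientMapₐ I₂ φ hle)
    ⟨Ideal.quotientMap_injective' (H := hle) hge,
      Ideal.quotientMap_surjective (H := hle) fun x => ⟨ψ x, hφψ x⟩⟩).toLinearEquiv.finrank_eq

end Colengths

section DiagonalHypersurface

variable {F : Type} [Field F]

lemma map_expandVars_spanInsertXPow {σ : Type} (e : σ → ℕ) (f : MvPolynomial σ F) (c : σ → ℕ) :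
    (spanInsertXPow F f c).map (expandVars F e) =
      spanInsertXPow F (expandVars F e f) (fun i => e i * c i) := by
  simp only [spanInsertXPow, Ideal.map_span, Set.image_insert_eq, ← Set.range_comp,
    Function.comp_def, map_pow, expandVars_X, pow_mul]

lemma finrank_quotient_spanInsertXPow_sum_X_pow (s : ℕ) (d m : Fin (s+1) → ℕ)
    (hd : ∀ i, 0 < d i) :
    Module.finrank F (MvPolynomial (Fin (s+1)) F ⧸
        spanInsertXPow F (∑ i, X i ^ d i) (fun i => d i * m i)) =
      (∏ i, d i) * Dcolength F s m := by
  have hsum : expandVars F d (∑ i, X i) = ∑ i, X i ^ d i := by simp [expandVars_X]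
  rw [← hsum, ← map_expandVars_spanInsertXPow, finrank_quotient_map_expandVars hd,
    finrank_quotient_spanInsertXPow_sum_X]

lemma hkColength_eq_finrank (s : ℕ) (d : Fin s → ℕ) (q : ℕ) :
    hkColength F s d q = Module.finrank F (MvPolynomial (Fin s) F ⧸
      spanInsertXPow F (∑ i, X i ^ d i) (fun _ => q)) := rfl

lemma prod_mul_Dcolength_div_le_hkColength (s : ℕ) (d : Fin (s+1) → ℕ) (hd : ∀ i, 0 < d i)
    (q : ℕ) : (∏ i, d i) * Dcolength F s (fun i => q / d i) ≤ hkColength F (s+1) d q := by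
  rw [← finrank_quotient_spanInsertXPow_sum_X_pow s d _ hd, hkColength_eq_finrank]
  exact finrank_quotient_spanInsertXPow_mono _ fun i => Nat.mul_div_le q (d i)

lemma hkColength_le_prod_mul_Dcolength_div_add_one (s : ℕ) (d : Fin (s+1) → ℕ)
    (hd : ∀ i, 0 < d i) (q : ℕ) :
    hkColength F (s+1) d q ≤ (∏ i, d i) * Dcolength F s (fun i => q / d i + 1) := by
  rw [← finrank_quotient_spanInsertXPow_sum_X_pow s d _ hd, hkColength_eq_finrank]
  exact finrank_quotient_spanInsertXPow_mono _ fun i => (Nat.lt_mul_div_succ q (hd i)).le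

instance (s : ℕ) (k : Fin (s+1) → ℕ) :
    FiniteDimensional F (MvPolynomial (Fin s) F ⧸ dIdeal F s k) :=
  finiteDimensional_quotient_of_X_pow_mem _ (fun i => k i.castSucc)
    fun i => Ideal.subset_span (Or.inl ⟨i, rfl⟩)

lemma Dcolength_mono (s : ℕ) {k k' : Fin (s+1) → ℕ} (h : k ≤ k') :
    Dcolength F s k ≤ Dcolength F s k' := by
  rw [Dcolength_eq_finrank, Dcolength_eq_finrank]
  refine finrank_quotient_le_of_le (Ideal.span_le.mpr ?_)
  rintro _ (⟨i, rfl⟩ | rfl)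
  · exact Ideal.pow_mem_of_pow_mem _ (Ideal.subset_span (Or.inl ⟨i, rfl⟩)) (h _)
  · exact Ideal.pow_mem_of_pow_mem _ (Ideal.subset_span (Or.inr rfl)) (h _)

lemma map_expandVars_dIdeal (p : ℕ) [ExpChar F p] (s : ℕ) (k : Fin (s+1) → ℕ) :
    (dIdeal F s k).map (expandVars F fun _ => p) = dIdeal F s (fun i => p * k i) := by
  simp only [dIdeal, Ideal.map_span, Set.image_union, Set.image_singleton, ← Set.range_comp,
    Function.comp_def, map_pow, map_sum, expandVars_X, ← sum_pow_char, ← pow_mul]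

lemma Dcolength_mul_of_expChar (p : ℕ) [ExpChar F p] (s : ℕ) (k : Fin (s+1) → ℕ) :
    Dcolength F s (fun i => p * k i) = p ^ s * Dcolength F s k := by
  rw [Dcolength_eq_finrank, ← map_expandVars_dIdeal,
    finrank_quotient_map_expandVars (fun _ => expChar_pos F p), Dcolength_eq_finrank]
  simp

lemma Dcolength_pow_mul_of_expChar (p : ℕ) [ExpChar F p] (s : ℕ) (k : Fin (s+1) → ℕ) (n : ℕ) :
    Dcolength F s (fun i => p ^ n * k i) = p ^ (n * s) * Dcolength F s k := by
  induction n with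
  | zero => simp
  | succ n ih =>
    simp only [pow_succ', mul_assoc, Dcolength_mul_of_expChar p s (fun i => p ^ n * k i), ih]
    ring

end DiagonalHypersurface

lemma mul_div_lt_mul_div_add_one {a c : ℕ} (b : ℕ) (ha : 0 < a) (hc : 0 < c) :
    a * b / c < a * (b / c + 1) := by
  rw [Nat.div_lt_iff_lt_mul hc, mul_assoc, mul_comm _ c]
  exact Nat.mul_lt_mul_of_pos_left (Nat.lt_mul_div_succ b hc) ha

section FrobeniusBounds

variable {F : Type} [Field F] (p : ℕ) [ExpChar F p] (s : ℕ) {d : Fin (s+1) → ℕ}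
  (hd : ∀ i, 0 < d i) (n : ℕ)
include hd

lemma prod_mul_Dcolength_mul_pow_le_hkColength :
    (∏ i, d i) * Dcolength F s (fun i => p / d i) * p ^ (n * s) ≤
      hkColength F (s+1) d (p ^ (n+1)) :=
  calc _ = (∏ i, d i) * Dcolength F s (fun i => p ^ n * (p / d i)) := by
          rw [Dcolength_pow_mul_of_expChar]; ring
    _ ≤ (∏ i, d i) * Dcolength F s (fun i => p ^ (n+1) / d i) :=
        Nat.mul_le_mul_left _ <| Dcolength_mono s fun i =>
          pow_succ p n ▸ Nat.mul_div_le_mul_div_assoc _ _ _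
    _ ≤ _ := prod_mul_Dcolength_div_le_hkColength s d hd _

lemma hkColength_le_prod_mul_Dcolength_mul_pow :
    hkColength F (s+1) d (p ^ (n+1)) ≤
      (∏ i, d i) * Dcolength F s (fun i => p / d i + 1) * p ^ (n * s) :=
  calc _ ≤ (∏ i, d i) * Dcolength F s (fun i => p ^ (n+1) / d i + 1) :=
        hkColength_le_prod_mul_Dcolength_div_add_one s d hd _
    _ ≤ (∏ i, d i) * Dcolength F s (fun i => p ^ n * (p / d i + 1)) :=
        Nat.mul_le_mul_left _ <| Dcolength_mono s fun i =>
          pow_succ p n ▸ mul_div_lt_mul_div_add_one p (pow_pos (expChar_pos F p) n) (hd i)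
    _ = _ := by rw [Dcolength_pow_mul_of_expChar]; ring

end FrobeniusBounds

lemma div_pow_eq_mul_pow_div_pow_succ {p : ℝ} (hp : p ≠ 0) (a : ℝ) (s n : ℕ) :
    a / p ^ s = a * p ^ (n * s) / (p ^ (n+1)) ^ s := by
  rw [← pow_mul, add_mul, one_mul, pow_add]
  field_simp

end

end HanMonsky

theorem statement1_general (s : ℕ) (d : Fin (s+1) → ℕ) (hd : ∀ i, 2 ≤ d i)
    (p : ℕ) (hp : p.Prime) (e : ℝ)
    (he : Filter.Tendsto
      (fun n : ℕ => (hkColength (ZMod p) (s+1) d (p ^ n) : ℝ) / ((p : ℝ) ^ n) ^ s)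
      Filter.atTop (nhds e)) :
    (∏ i, (d i : ℝ)) * (Dcolength (ZMod p) s (fun i => p / d i) : ℝ) / (p : ℝ) ^ s ≤ e ∧
      e ≤ (∏ i, (d i : ℝ)) * (Dcolength (ZMod p) s (fun i => p / d i + 1) : ℝ) / (p : ℝ) ^ s := by
  have : Fact p.Prime := ⟨hp⟩
  have hd₀ (i : Fin (s+1)) : 0 < d i := lt_of_lt_of_le two_pos (hd i)
  have hp₀ : (p : ℝ) ≠ 0 := Nat.cast_ne_zero.mpr hp.ne_zero
  have hlim := he.comp (tendsto_add_atTop_nat 1)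
  refine ⟨ge_of_tendsto' hlim fun n => ?_, le_of_tendsto' hlim fun n => ?_⟩
  · rw [HanMonsky.div_pow_eq_mul_pow_div_pow_succ hp₀ _ s n, Function.comp_apply]
    gcongr
    exact_mod_cast HanMonsky.prod_mul_Dcolength_mul_pow_le_hkColength (F := ZMod p) p s hd₀ n
  · rw [HanMonsky.div_pow_eq_mul_pow_div_pow_succ hp₀ _ s n, Function.comp_apply]
    gcongr
    exact_mod_cast HanMonsky.hkColength_le_prod_mul_Dcolength_mul_pow (F := ZMod p) p s hd₀ n

/-- If for a fixed prime `p > max d_i` the Hilbert–Kunz limit `e_p` exists for the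
diagonal hypersurface, then it is squeezed between the two Han–Monsky `D`-terms. -/
theorem statement1 (s : ℕ) (hs : 1 ≤ s) (d : Fin (s+1) → ℕ) (hd : ∀ i, 2 ≤ d i)
    (p : ℕ) (hp : p.Prime) (hpd : ∀ i, d i < p) (e : ℝ)
    (he : Filter.Tendsto
      (fun n : ℕ => (hkColength (ZMod p) (s+1) d (p ^ n) : ℝ) / ((p : ℝ) ^ n) ^ s)
      Filter.atTop (nhds e)) :
    (∏ i, (d i : ℝ)) * (Dcolength (ZMod p) s (fun i => p / d i) : ℝ) / (p : ℝ) ^ s ≤ e ∧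
      e ≤ (∏ i, (d i : ℝ)) * (Dcolength (ZMod p) s (fun i => p / d i + 1) : ℝ) / (p : ℝ) ^ s :=
  statement1_general s d hd p hp e he
end

section
/- Let p be an odd prime and let q = p^n for an integer n ≥ 0. Then dim_{ℤ/pℤ} (ℤ/pℤ)[x, y]/(x^{2q}, y^{2q}, (x+y)^{2q}) = 3q². -/
/-!
In characteristic `p` we have `(x + y)^{2q} = x^{2q} + y^{2q} + 2 x^q y^q`, and `2` is a unit
because `p` is odd, so the ideal `(x^{2q}, y^{2q}, (x+y)^{2q})` is the monomial ideal
`(x^{2q}, y^{2q}, x^q y^q)`. The monomials outside a monomial ideal form a basis of the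
quotient; here they are the `x^i y^j` with `i, j < 2q` and not both `i, j ≥ q`, and there are
`4q² - q² = 3q²` of them.
-/

open MvPolynomial Filter

/-- Both sides are `0` when infinitely many monomials lie outside the ideal. -/
theorem MvPolynomial.finrank_quotient_span_monomial {σ F : Type*} [Field F]
    (S : Set (σ →₀ ℕ)) :
    Module.finrank F (MvPolynomial σ F ⧸ Ideal.span ((fun s => monomial s (1 : F)) '' S)) =
      {m : σ →₀ ℕ | ∀ s ∈ S, ¬ s ≤ m}.ncard := by
  classical
  set G := {m : σ →₀ ℕ | ∀ s ∈ S, ¬ s ≤ m}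
  set J := Ideal.span ((fun s => monomial s (1 : F)) '' S)
  let φ : MvPolynomial σ F →ₗ[F] (G →₀ F) :=
    (Finsupp.lsubtypeDomain G).comp (basisMonomials σ F).repr.toLinearMap
  have hker : LinearMap.ker φ = J.restrictScalars F := by
    ext f
    rw [LinearMap.mem_ker, Submodule.restrictScalars_mem, mem_ideal_span_monomial_image,
      LinearMap.comp_apply, Finsupp.lsubtypeDomain_apply, Finsupp.subtypeDomain_eq_zero_iff']
    refine forall_congr' fun m => ?_
    rw [mem_support_iff, not_imp_comm]
    simp only [G, Set.mem_ofPred_eq, not_exists, not_and]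
    rfl
  have hsurj : Function.Surjective φ := fun g =>
    ⟨(basisMonomials σ F).repr.symm g.extendDomain, by
      simp only [φ, LinearMap.comp_apply, LinearEquiv.coe_coe, LinearEquiv.apply_symm_apply,
        Finsupp.lsubtypeDomain_apply, Finsupp.subtypeDomain_extendDomain]⟩
  calc Module.finrank F (MvPolynomial σ F ⧸ J)
      = Module.finrank F (MvPolynomial σ F ⧸ LinearMap.ker φ) := by
        rw [hker]; exact (Submodule.Quotient.restrictScalarsEquiv F J).finrank_eq.symm
    _ = Module.finrank F (G →₀ F) := (φ.quotKerEquivOfSurjective hsurj).finrank_eq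
    _ = G.ncard := by simp [Module.finrank, ← Nat.card_coe_set_eq, Nat.card]

theorem Ideal.span_insert_insert_add_add_unit_mul {R : Type*} [CommRing R] (x y z : R) {u : R}
    (hu : IsUnit u) : Ideal.span {x, y, x + y + u * z} = Ideal.span {x, y, z} := by
  obtain ⟨v, rfl⟩ := hu
  have mem {s : Set R} {w : R} (h : w ∈ s) : w ∈ Ideal.span s := Ideal.subset_span h
  apply le_antisymm <;>
    simp only [Ideal.span_le, Set.insert_subset_iff, Set.singleton_subset_iff, SetLike.mem_coe]
  · refine ⟨mem (by simp), mem (by simp), ?_⟩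
    exact add_mem (add_mem (mem (by simp)) (mem (by simp)))
      (Ideal.mul_mem_left _ _ (mem (by simp)))
  · refine ⟨mem (by simp), mem (by simp), ?_⟩
    rw [← Units.inv_mul_cancel_left v z, show (v : R) * z = x + y + v * z - x - y by ring]
    exact Ideal.mul_mem_left _ _
      (sub_mem (sub_mem (mem (by simp)) (mem (by simp))) (mem (by simp)))

theorem add_pow_two_mul_expChar_pow {R : Type*} [CommSemiring R] (p : ℕ) [ExpChar R p]
    (x y : R) (n : ℕ) :
    (x + y) ^ (2 * p ^ n) = x ^ (2 * p ^ n) + y ^ (2 * p ^ n) + 2 * (x ^ p ^ n * y ^ p ^ n) := by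
  rw [mul_comm, pow_mul, pow_mul, pow_mul, add_pow_expChar_pow]
  ring

theorem ncard_standard_monomials_pow_pow_mul_pow (a b : ℕ) :
    {m : Fin 2 →₀ ℕ | ∀ s ∈ ({Finsupp.single 0 a, Finsupp.single 1 a,
      Finsupp.single 0 b + Finsupp.single 1 b} : Set (Fin 2 →₀ ℕ)), ¬ s ≤ m}.ncard =
      a ^ 2 - (a - b) ^ 2 := by
  set G := {m : Fin 2 →₀ ℕ | ∀ s ∈ ({Finsupp.single 0 a, Finsupp.single 1 a,
      Finsupp.single 0 b + Finsupp.single 1 b} : Set (Fin 2 →₀ ℕ)), ¬ s ≤ m}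
  set T := Finset.range a ×ˢ Finset.range a \ Finset.Ico b a ×ˢ Finset.Ico b a
  have hmem : ∀ m, m ∈ G ↔ finTwoArrowEquiv' ℕ m ∈ T := by
    intro m
    simp [G, T, Finsupp.le_def, Fin.forall_fin_two]
    omega
  have hTsub : Finset.Ico b a ×ˢ Finset.Ico b a ⊆ Finset.range a ×ˢ Finset.range a :=
    Finset.product_subset_product (fun _ => by simp +contextual) (fun _ => by simp +contextual)
  rw [← Nat.card_coe_set_eq, Nat.card_congr ((finTwoArrowEquiv' ℕ).subtypeEquiv hmem),
    Nat.card_eq_fintype_card, Fintype.card_coe, Finset.card_sdiff_of_subset hTsub]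
  simp [sq]

/-- For an odd prime `p` and `q = p^n`,
`dim_{ℤ/pℤ} (ℤ/pℤ)[x,y]/(x^{2q}, y^{2q}, (x+y)^{2q}) = 3q²`. -/
theorem statement11 (p : ℕ) (hp : p.Prime) (hodd : Odd p) (n : ℕ) :
    Dcolength (ZMod p) 2 ![2 * p ^ n, 2 * p ^ n, 2 * p ^ n] = 3 * (p ^ n) ^ 2 := by
  have := Fact.mk hp
  set q := p ^ n
  have h2 : IsUnit (2 : MvPolynomial (Fin 2) (ZMod p)) := by
    have h2' : IsUnit ((2 : ℕ) : ZMod p) :=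
      (ZMod.isUnit_iff_coprime 2 p).mpr (Nat.coprime_two_left.mpr hodd)
    simpa only [Nat.cast_ofNat, map_ofNat] using
      h2'.map (C : ZMod p →+* MvPolynomial (Fin 2) (ZMod p))
  have hideal : Set.range (fun i : Fin 2 => (X i : MvPolynomial (Fin 2) (ZMod p)) ^
        ![2 * q, 2 * q, 2 * q] i.castSucc) ∪
      {(∑ i : Fin 2, (X i : MvPolynomial (Fin 2) (ZMod p))) ^
        ![2 * q, 2 * q, 2 * q] (Fin.last 2)} =
      {X 0 ^ (2 * q), X 1 ^ (2 * q), (X 0 + X 1) ^ (2 * q)} := by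
    ext f
    simp [Fin.exists_fin_two, Fin.sum_univ_two]
    tauto
  have hmonomial : ({X 0 ^ (2 * q), X 1 ^ (2 * q), X 0 ^ q * X 1 ^ q} :
      Set (MvPolynomial (Fin 2) (ZMod p))) = (fun s => monomial s 1) ''
      {Finsupp.single 0 (2 * q), Finsupp.single 1 (2 * q),
        Finsupp.single 0 q + Finsupp.single 1 q} := by
    simp [Set.image_insert_eq, X_pow_eq_monomial, monomial_mul]
  rw [Dcolength, hideal, add_pow_two_mul_expChar_pow,
    Ideal.span_insert_insert_add_add_unit_mul _ _ _ h2, hmonomial,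
    finrank_quotient_span_monomial, ncard_standard_monomials_pow_pow_mul_pow, two_mul,
    Nat.add_sub_cancel]
  exact Nat.sub_eq_of_eq_add (by ring)
end

section
/- Let p be an odd prime, set F = ℤ/pℤ, and for each integer N ≥ 1 let a_N = dim_F F[x, y]/(x^N, y^N, (x+y)^N)/N². Then the sequence (a_N) does not converge as N → ∞: along the subsequence N = p^n one has a_N = 1 for all n, while along the subsequence N = 2p^n one has a_N = 3/4 for all n. -/
/-!
In characteristic `p` the Frobenius gives `(x + y) ^ q = x ^ q + y ^ q` for `q = p ^ n`, so the
ideal `(x ^ q, y ^ q, (x + y) ^ q)` is the monomial ideal `(x ^ q, y ^ q)`, whose standard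
monomials fill a `q × q` box. For `N = 2q` we get `(x + y) ^ 2q = x ^ 2q + y ^ 2q + 2 x ^ q y ^ q`
and `2` is invertible, so the ideal is the monomial ideal `(x ^ 2q, y ^ 2q, x ^ q y ^ q)`: its
standard monomials fill a `2q × 2q` box minus a `q × q` corner, `3q²` of them. Two subsequences
with constant values `1` and `3/4` leave no room for a limit.
-/

open MvPolynomial Filter

namespace MvPolynomial

variable {F σ : Type*} [Field F]

/-- Both sides are `0` when there are infinitely many standard monomials. -/
theorem finrank_quotient_span_monomial_image (S : Set (σ →₀ ℕ)) :
    Module.finrank F (MvPolynomial σ F ⧸ Ideal.span ((monomial · (1 : F)) '' S)) =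
      {e | ∀ s ∈ S, ¬ s ≤ e}.ncard := by
  classical
  set B := {e | ∀ s ∈ S, ¬ s ≤ e}
  set I := Ideal.span ((monomial · (1 : F)) '' S)
  let coeffsOn : MvPolynomial σ F →ₗ[F] (B →₀ F) :=
    Finsupp.lsubtypeDomain B ∘ₗ (AddMonoidAlgebra.coeffLinearEquiv F).toLinearMap
  have surj : Function.Surjective coeffsOn := fun g =>
    ⟨AddMonoidAlgebra.ofCoeff g.extendDomain, Finsupp.subtypeDomain_extendDomain g⟩
  have ker : LinearMap.ker coeffsOn = I.restrictScalars F := by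
    ext x
    change Finsupp.subtypeDomain (· ∈ B) (AddMonoidAlgebra.coeff x) = 0 ↔ x ∈ I
    rw [Finsupp.subtypeDomain_eq_zero_iff', mem_ideal_span_monomial_image]
    refine forall_congr' fun e => ?_
    rw [mem_support_iff, ← not_imp_comm]
    simp only [B, Set.mem_ofPred_eq, not_exists, not_and]
    rfl
  calc Module.finrank F (MvPolynomial σ F ⧸ I)
      = Module.finrank F (MvPolynomial σ F ⧸ I.restrictScalars F) :=
        (Submodule.Quotient.restrictScalarsEquiv F I).finrank_eq.symm
    _ = Module.finrank F (B →₀ F) := by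
        rw [← ker]; exact (coeffsOn.quotKerEquivOfSurjective surj).finrank_eq
    _ = B.ncard := by
        rw [Module.finrank, rank_finsupp_self, Cardinal.toNat_lift, ← Nat.card_coe_set_eq]; rfl

theorem ncard_setOf_forall_apply_mem [Fintype σ] (t : σ → Finset ℕ) :
    {e : σ →₀ ℕ | ∀ i, e i ∈ t i}.ncard = ∏ i, (t i).card := by
  classical
  have : {e : σ →₀ ℕ | ∀ i, e i ∈ t i} =
      Finsupp.equivFunOnFinite.symm '' ↑(Fintype.piFinset t) := by
    ext e
    simp [Equiv.image_eq_preimage_symm]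
  rw [this, Set.ncard_image_of_injective _ Finsupp.equivFunOnFinite.symm.injective,
    Set.ncard_coe_finset, Fintype.card_piFinset]

theorem finrank_quotient_span_X_pow [Fintype σ] (a : ℕ) :
    Module.finrank F
        (MvPolynomial σ F ⧸ Ideal.span (Set.range fun i => (X i : MvPolynomial σ F) ^ a)) =
      a ^ Fintype.card σ := by
  have standard : {e | ∀ s ∈ Set.range fun i => Finsupp.single i a, ¬ s ≤ e} =
      {e : σ →₀ ℕ | ∀ i, e i ∈ Finset.range a} := by
    ext e
    simp [Finsupp.single_le_iff]
  have generators : (Set.range fun i => (X i : MvPolynomial σ F) ^ a) =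
      (monomial · (1 : F)) '' Set.range fun i => Finsupp.single i a := by
    simp [← Set.range_comp, Function.comp_def, X_pow_eq_monomial]
  rw [generators, finrank_quotient_span_monomial_image, standard, ncard_setOf_forall_apply_mem]
  simp

theorem finrank_quotient_span_insert_prod_X_pow [Fintype σ] (a b : ℕ) :
    Module.finrank F (MvPolynomial σ F ⧸ Ideal.span (insert (∏ i, (X i : MvPolynomial σ F) ^ b)
      (Set.range fun i => (X i : MvPolynomial σ F) ^ a))) =
      a ^ Fintype.card σ - (a - b) ^ Fintype.card σ := by
  classical
  have standard : {e | ∀ s ∈ insert (∑ i, Finsupp.single i b)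
        (Set.range fun i => Finsupp.single i a), ¬ s ≤ e} =
      {e : σ →₀ ℕ | ∀ i, e i ∈ Finset.range a} \ {e | ∀ i, e i ∈ Finset.Ico b a} := by
    have sum_single_le (e : σ →₀ ℕ) : ∑ i, Finsupp.single i b ≤ e ↔ ∀ i, b ≤ e i := by
      simp [Finsupp.le_def, Finsupp.single_apply]
    ext e
    simp only [Set.mem_ofPred_eq, Set.forall_mem_insert, Set.forall_mem_range, Set.mem_sdiff,
      Finsupp.single_le_iff, sum_single_le, Finset.mem_range, Finset.mem_Ico, not_le]
    rw [and_comm]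
    exact and_congr_right fun ha => not_congr (forall_congr' fun i => (and_iff_left (ha i)).symm)
  have generators : insert (∏ i, (X i : MvPolynomial σ F) ^ b)
      (Set.range fun i => (X i : MvPolynomial σ F) ^ a) =
      (monomial · (1 : F)) '' insert (∑ i, Finsupp.single i b)
        (Set.range fun i => Finsupp.single i a) := by
    rw [Set.image_insert_eq, monomial_sum_one, ← Set.range_comp]
    simp [Function.comp_def, X_pow_eq_monomial]
  have corner_subset : {e : σ →₀ ℕ | ∀ i, e i ∈ Finset.Ico b a} ⊆
      {e | ∀ i, e i ∈ Finset.range a} := fun _ he i =>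
    Finset.mem_range.2 (Finset.mem_Ico.1 (he i)).2
  have corner_finite : {e : σ →₀ ℕ | ∀ i, e i ∈ Finset.Ico b a}.Finite :=
    (Set.Finite.pi' fun _ => Finset.finite_toSet _).preimage DFunLike.coe_injective.injOn
  rw [generators, finrank_quotient_span_monomial_image, standard,
    Set.ncard_sdiff corner_subset corner_finite,
    ncard_setOf_forall_apply_mem, ncard_setOf_forall_apply_mem]
  simp

end MvPolynomial

theorem Ideal.span_insert_eq_span_insert_of_sub_mem {R : Type*} [CommRing R] {s : Set R}
    {x y : R} (h : x - y ∈ Ideal.span s) : Ideal.span (insert x s) = Ideal.span (insert y s) := by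
  have le_of_sub_mem {x y : R} (h : x - y ∈ Ideal.span s) :
      Ideal.span (insert x s) ≤ Ideal.span (insert y s) :=
    Ideal.span_le.2 <| Set.insert_subset (Ideal.mem_span_insert.2 ⟨1, _, h, by ring⟩)
      ((Set.subset_insert y s).trans Ideal.subset_span)
  exact le_antisymm (le_of_sub_mem h) (le_of_sub_mem (by rw [← neg_sub]; exact neg_mem h))

section Dcolength

open MvPolynomial

variable {F : Type} [Field F]

theorem Dcolength_const (s N : ℕ) :
    Dcolength F s (fun _ => N) = Module.finrank F (MvPolynomial (Fin s) F ⧸ Ideal.span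
      (insert ((∑ i, X i) ^ N) (Set.range fun i => (X i : MvPolynomial (Fin s) F) ^ N))) := by
  rw [Dcolength, Set.union_singleton]

theorem Dcolength_const_expChar_pow (p n : ℕ) [ExpChar F p] (s : ℕ) :
    Dcolength F s (fun _ => p ^ n) = (p ^ n) ^ s := by
  rw [Dcolength_const, sum_pow_char_pow, Ideal.span_insert, sup_eq_right.2
    ((Ideal.span_singleton_le_iff_mem _).2 (Ideal.sum_mem _ fun i _ =>
      Ideal.subset_span (Set.mem_range_self i))), finrank_quotient_span_X_pow, Fintype.card_fin]

theorem Dcolength_two_const_two_mul_expChar_pow (p n : ℕ) [ExpChar F p] (h2 : (2 : F) ≠ 0) :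
    Dcolength F 2 (fun _ => 2 * p ^ n) = 3 * (p ^ n) ^ 2 := by
  set q := p ^ n
  have frobenius_sq : ((X 0 + X 1 : MvPolynomial (Fin 2) F)) ^ (2 * q) - 2 * ∏ i, X i ^ q =
      X 0 ^ (2 * q) + X 1 ^ (2 * q) := by
    rw [mul_comm 2 q, pow_mul, add_pow_expChar_pow, Fin.prod_univ_two]
    ring
  have pure_powers_mem : (X 0 + X 1 : MvPolynomial (Fin 2) F) ^ (2 * q) - 2 * ∏ i, X i ^ q ∈
      Ideal.span (Set.range fun i => X i ^ (2 * q)) := by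
    rw [frobenius_sq]
    exact add_mem (Ideal.subset_span (Set.mem_range_self 0))
      (Ideal.subset_span (Set.mem_range_self 1))
  have two_isUnit : IsUnit (2 : MvPolynomial (Fin 2) F) := by
    rw [← map_ofNat C 2]
    exact h2.isUnit.map C
  have mixed_term : Ideal.span {(2 : MvPolynomial (Fin 2) F) * ∏ i, X i ^ q} =
      Ideal.span {∏ i, X i ^ q} :=
    Ideal.span_singleton_mul_left_unit two_isUnit _
  rw [Dcolength_const, Fin.sum_univ_two,
    Ideal.span_insert_eq_span_insert_of_sub_mem pure_powers_mem, Ideal.span_insert, mixed_term,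
    ← Ideal.span_insert, finrank_quotient_span_insert_prod_X_pow,
    Fintype.card_fin, two_mul, Nat.add_sub_cancel]
  exact Nat.sub_eq_of_eq_add (by ring)

end Dcolength

/-- Buchweitz–Chen: for an odd prime `p`, the sequence
`a_N = dim_F F[x,y]/(x^N, y^N, (x+y)^N)/N²` (with `F = ℤ/pℤ`) does not converge
as `N → ∞`: along `N = p^n` one has `a_N = 1`, while along `N = 2p^n` one has
`a_N = 3/4`. -/
theorem statement13 (p : ℕ) (hp : p.Prime) (hodd : Odd p) :
    (¬ ∃ L : ℝ, Filter.Tendsto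
        (fun N : ℕ => (Dcolength (ZMod p) 2 ![N, N, N] : ℝ) / (N : ℝ) ^ 2)
        Filter.atTop (nhds L)) ∧
    (∀ n : ℕ, (Dcolength (ZMod p) 2 ![p ^ n, p ^ n, p ^ n] : ℝ) / ((p : ℝ) ^ n) ^ 2 = 1) ∧
    (∀ n : ℕ, (Dcolength (ZMod p) 2 ![2 * p ^ n, 2 * p ^ n, 2 * p ^ n] : ℝ)
        / ((2 * (p : ℝ) ^ n)) ^ 2 = 3 / 4) := by
  have : Fact p.Prime := ⟨hp⟩
  have two_ne_zero_zmod : (2 : ZMod p) ≠ 0 :=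
    Ring.two_ne_zero (by rw [ZMod.ringChar_zmod_n]; exact hodd.ne_two_of_dvd_nat dvd_rfl)
  have p_pow_ne_zero (n : ℕ) : (p : ℝ) ^ n ≠ 0 := pow_ne_zero n (Nat.cast_ne_zero.2 hp.ne_zero)
  simp only [Matrix.vec_single_eq_const, Matrix.vecCons_const]
  have along_pow (n : ℕ) :
      (Dcolength (ZMod p) 2 (fun _ => p ^ n) : ℝ) / ((p : ℝ) ^ n) ^ 2 = 1 := by
    rw [Dcolength_const_expChar_pow]
    push_cast
    exact div_self (pow_ne_zero 2 (p_pow_ne_zero n))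
  have along_two_mul_pow (n : ℕ) :
      (Dcolength (ZMod p) 2 (fun _ => 2 * p ^ n) : ℝ) / (2 * (p : ℝ) ^ n) ^ 2 = 3 / 4 := by
    rw [Dcolength_two_const_two_mul_expChar_pow p n two_ne_zero_zmod]
    have hq := p_pow_ne_zero n
    push_cast
    field_simp
    ring
  refine ⟨?_, along_pow, along_two_mul_pow⟩
  rintro ⟨L, hL⟩
  have pow_tendsto : Tendsto (p ^ ·) atTop atTop := tendsto_pow_atTop_atTop_of_one_lt hp.one_lt
  have two_mul_pow_tendsto : Tendsto (2 * p ^ ·) atTop atTop :=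
    pow_tendsto.const_mul_atTop' two_pos
  have limit_one : L = 1 := tendsto_nhds_unique (hL.comp pow_tendsto) <|
    tendsto_const_nhds.congr fun n => by simp [along_pow]
  have limit_three_quarters : L = 3 / 4 := tendsto_nhds_unique (hL.comp two_mul_pow_tendsto) <|
    tendsto_const_nhds.congr fun n => by simp [along_two_mul_pow]
  norm_num [limit_one] at limit_three_quarters
end
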